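/- Let Γ be an additive subsemigroup of ℕⁿ × ℕ, for k ≥ 1 set Γ_k := { α ∈ ℕⁿ : (α,k) ∈ Γ } and Δ_k := (1/k)·Conv(Γ_k), and let Δ_k^ess denote the interior of Δ_k as a subset of ℝ₊ⁿ := { x ∈ ℝⁿ : xᵢ ≥ 0 for all i } with its induced topology. Then Δ^ess := ⋃_{k≥1} Δ_{k!}^ess is a convex subset of ℝⁿ which is open in the subspace topology of ℝ₊ⁿ. -/

import Mathlib

open Pointwise

/-- The nonnegative orthant `ℝ₊ⁿ`. -/
def Rplus (n : ℕ) : Set (Fin n → ℝ) := {x | ∀ i, 0 ≤ x i}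

/-- The essential interior of `T`: the interior of `T ∩ ℝ₊ⁿ` as a subset of `ℝ₊ⁿ`
with its induced (subspace) topology, viewed again as a subset of `ℝⁿ`. -/
def essInterior {n : ℕ} (T : Set (Fin n → ℝ)) : Set (Fin n → ℝ) :=
  (Subtype.val : Rplus n → (Fin n → ℝ)) ''
    interior ((Subtype.val : Rplus n → (Fin n → ℝ)) ⁻¹' T)

/-!
The inclusions `Γ_k + Γ_l ⊆ Γ_{k+l}` give `m • Conv(Γ_k) ⊆ Conv(Γ_{mk})`, hence `Δ_k ⊆ Δ_l` whenever
`k ∣ l`; so the sets `Δ_{k!}` increase with `k`, and `Δ^ess` is an increasing union. It is therefore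
convex once each `Δ_k^ess` is, and this holds for the essential interior of any convex set: near
`z = t x + s y` every point `w` of the orthant is `t (a w) + s (b w)` for coordinatewise rescalings
`a, b ≥ 0` with `a z = x`, `b z = y`, and these rescalings are continuous self-maps of `ℝ₊ⁿ`.
-/

open Filter Topology Nat

lemma Real.exists_nonneg_mul_eq_of_convex_combination {x y t s : ℝ} (hx : 0 ≤ x) (hy : 0 ≤ y)
    (ht : 0 < t) (hs : 0 < s) (hts : t + s = 1) :
    ∃ a b : ℝ, 0 ≤ a ∧ 0 ≤ b ∧ t * a + s * b = 1 ∧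
      a * (t * x + s * y) = x ∧ b * (t * x + s * y) = y := by
  rcases (by positivity : 0 ≤ t * x + s * y).eq_or_lt with hz | hz
  · obtain ⟨rfl, rfl⟩ : x = 0 ∧ y = 0 := by
      constructor <;> nlinarith [mul_nonneg ht.le hx, mul_nonneg hs.le hy]
    exact ⟨1, 1, zero_le_one, zero_le_one, by simpa using hts, by simp, by simp⟩
  · exact ⟨x / (t * x + s * y), y / (t * x + s * y), by positivity, by positivity,
      by field_simp, div_mul_cancel₀ x hz.ne', div_mul_cancel₀ y hz.ne'⟩

lemma exists_nonneg_mul_eq_of_convex_combination {ι : Type*} {x y : ι → ℝ}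
    (hx : ∀ i, 0 ≤ x i) (hy : ∀ i, 0 ≤ y i) {t s : ℝ} (ht : 0 < t) (hs : 0 < s)
    (hts : t + s = 1) :
    ∃ a b : ι → ℝ, (∀ i, 0 ≤ a i) ∧ (∀ i, 0 ≤ b i) ∧ t • a + s • b = 1 ∧
      a * (t • x + s • y) = x ∧ b * (t • x + s • y) = y := by
  choose a b ha hb hab hax hby using fun i =>
    Real.exists_nonneg_mul_eq_of_convex_combination (hx i) (hy i) ht hs hts
  exact ⟨a, b, ha, hb, funext hab, funext hax, funext hby⟩

section EssInterior

variable {n : ℕ}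

lemma mem_essInterior_iff {T : Set (Fin n → ℝ)} {z : Fin n → ℝ} :
    z ∈ essInterior T ↔ z ∈ Rplus n ∧ T ∈ 𝓝[Rplus n] z := by
  simp only [essInterior, Set.mem_image, mem_interior_iff_mem_nhds,
    preimage_coe_mem_nhds_subtype, Subtype.exists, exists_and_right, exists_eq_right, exists_prop]

lemma essInterior_mono {S T : Set (Fin n → ℝ)} (h : S ⊆ T) : essInterior S ⊆ essInterior T :=
  Set.image_mono (interior_mono (Set.preimage_mono h))

lemma isOpen_preimage_essInterior (T : Set (Fin n → ℝ)) :
    IsOpen ((Subtype.val : Rplus n → (Fin n → ℝ)) ⁻¹' essInterior T) := by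
  rw [essInterior, Set.preimage_image_eq _ Subtype.val_injective]
  exact isOpen_interior

lemma Convex.essInterior {T : Set (Fin n → ℝ)} (hT : Convex ℝ T) :
    Convex ℝ (essInterior T) := by
  refine convex_iff_forall_pos.2 fun x hx y hy t s ht hs hts => ?_
  rw [mem_essInterior_iff] at hx hy ⊢
  obtain ⟨a, b, ha, hb, hab, hax, hby⟩ :=
    exists_nonneg_mul_eq_of_convex_combination hx.1 hy.1 ht hs hts
  have hz : t • x + s • y ∈ Rplus n := fun i => by
    have := hx.1 i; have := hy.1 i
    simp only [Pi.add_apply, Pi.smul_apply, smul_eq_mul]; positivity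
  have tendsto_mul {c : Fin n → ℝ} (hc : ∀ i, 0 ≤ c i) :
      Tendsto (c * ·) (𝓝[Rplus n] (t • x + s • y)) (𝓝[Rplus n] (c * (t • x + s • y))) :=
    (continuous_const.mul continuous_id).continuousWithinAt.tendsto_nhdsWithin
      fun w hw i => mul_nonneg (hc i) (hw i)
  refine ⟨hz, ?_⟩
  filter_upwards [tendsto_mul ha (hax ▸ hx.2), tendsto_mul hb (hby ▸ hy.2)] with w hwa hwb
  have hw : t • (a * w) + s • (b * w) = w := by
    rw [← smul_mul_assoc, ← smul_mul_assoc, ← add_mul, hab, one_mul]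
  exact hw ▸ hT hwa hwb ht.le hs.le hts

end EssInterior

section SuperadditiveFamily

variable {E : Type*} [AddCommGroup E] [Module ℝ E] {S : ℕ → Set E}

lemma natCast_smul_convexHull_subset (hS : ∀ k l, S k + S l ⊆ S (k + l)) {m : ℕ} (hm : 1 ≤ m)
    (k : ℕ) : (m : ℝ) • convexHull ℝ (S k) ⊆ convexHull ℝ (S (m * k)) := by
  induction m, hm using Nat.le_induction with
  | base => simp
  | succ m _ ih =>
    calc ((m + 1 : ℕ) : ℝ) • convexHull ℝ (S k)
        ⊆ (m : ℝ) • convexHull ℝ (S k) + convexHull ℝ (S k) := by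
          rintro _ ⟨y, hy, rfl⟩
          exact ⟨_, ⟨y, hy, rfl⟩, y, hy, by push_cast; rw [add_smul, one_smul]⟩
      _ ⊆ convexHull ℝ (S (m * k)) + convexHull ℝ (S k) := Set.add_subset_add_right ih
      _ = convexHull ℝ (S (m * k) + S k) := (convexHull_add _ _).symm
      _ ⊆ convexHull ℝ (S ((m + 1) * k)) := convexHull_mono (by rw [add_one_mul]; exact hS _ _)

lemma inv_smul_convexHull_subset_of_dvd (hS : ∀ k l, S k + S l ⊆ S (k + l)) {k l : ℕ}
    (hkl : k ∣ l) (hl : l ≠ 0) :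
    (k : ℝ)⁻¹ • convexHull ℝ (S k) ⊆ (l : ℝ)⁻¹ • convexHull ℝ (S l) := by
  obtain ⟨m, rfl⟩ := hkl
  have hm : m ≠ 0 := right_ne_zero_of_mul hl
  calc (k : ℝ)⁻¹ • convexHull ℝ (S k) = ((k * m : ℕ) : ℝ)⁻¹ • (m : ℝ) • convexHull ℝ (S k) := by
        rw [smul_smul, Nat.cast_mul, mul_inv, mul_assoc, inv_mul_cancel₀ (Nat.cast_ne_zero.2 hm),
          mul_one]
    _ ⊆ ((k * m : ℕ) : ℝ)⁻¹ • convexHull ℝ (S (k * m)) := by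
        rw [mul_comm k m]
        exact Set.smul_set_mono (natCast_smul_convexHull_subset hS (Nat.one_le_iff_ne_zero.2 hm) k)

lemma monotone_inv_smul_convexHull_factorial (hS : ∀ k l, S k + S l ⊆ S (k + l)) :
    Monotone fun k => ((k ! : ℕ) : ℝ)⁻¹ • convexHull ℝ (S k !) := fun _ _ hkl =>
  inv_smul_convexHull_subset_of_dvd hS (factorial_dvd_factorial hkl) (factorial_ne_zero _)

end SuperadditiveFamily

theorem stmt8 (n : ℕ) (Γ : Set ((Fin n → ℕ) × ℕ))
    (hΓ : ∀ x ∈ Γ, ∀ y ∈ Γ, x + y ∈ Γ)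
    (Γk : ℕ → Set (Fin n → ℝ))
    (hΓk : ∀ k, Γk k = {x | ∃ α : Fin n → ℕ, (α, k) ∈ Γ ∧ x = fun i => (α i : ℝ)})
    (Δk : ℕ → Set (Fin n → ℝ))
    (hΔk : ∀ k, Δk k = (k : ℝ)⁻¹ • convexHull ℝ (Γk k))
    (Δess : Set (Fin n → ℝ))
    (hΔess : Δess = ⋃ k ≥ 1, essInterior (Δk (Nat.factorial k))) :
    Convex ℝ Δess ∧
      IsOpen ((Subtype.val : Rplus n → (Fin n → ℝ)) ⁻¹' Δess) := by
  have hΓk_add : ∀ k l, Γk k + Γk l ⊆ Γk (k + l) := by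
    rintro k l _ ⟨_, hx, _, hy, rfl⟩
    rw [hΓk] at hx hy ⊢
    obtain ⟨α, hα, rfl⟩ := hx
    obtain ⟨β, hβ, rfl⟩ := hy
    exact ⟨α + β, hΓ _ hα _ hβ, by ext; simp⟩
  have hconv : ∀ k, Convex ℝ (essInterior (Δk k)) := fun k => by
    rw [hΔk]
    exact ((convex_convexHull ℝ _).smul _).essInterior
  have hmono : Monotone fun k => essInterior (Δk k !) := fun k l hkl => by
    simp only [hΔk]
    exact essInterior_mono (monotone_inv_smul_convexHull_factorial hΓk_add hkl)
  subst hΔess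
  rw [Set.iUnion_ge_eq_iUnion_nat_add]
  refine ⟨(hmono.comp fun _ _ h => Nat.add_le_add_right h 1).directed_le.convex_iUnion
    fun _ => hconv _, ?_⟩
  rw [Set.preimage_iUnion]
  exact isOpen_iUnion fun k => isOpen_preimage_essInterior _
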